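/- Consider two finite MDPs M_1 and M_2 differing only in transition dynamics P_1 and P_2, with reward bounded by r_max and discount γ ∈ [0,1). Let π*_1 and π*_2 be optimal policies for M_1 and M_2 respectively. Then |J_{M_1}(π*_1) − J_{M_2}(π*_2)| ≤ (2·r_max/(1−γ)²)·sup_{s,a} D_TV(P_1(·|s,a), P_2(·|s,a)). -/

import Mathlib

open scoped BigOperators

/-- A (sub)stochastic transition kernel over finite state and action spaces. -/
def IsKernel {S A : Type*} [Fintype S] [Fintype A] (P : S → A → S → ℝ) : Prop :=
  ∀ s a, (∀ s', 0 ≤ P s a s') ∧ ∑ s', P s a s' = 1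

/-- A stationary stochastic policy. -/
def IsPolicy {S A : Type*} [Fintype S] [Fintype A] (π : S → A → ℝ) : Prop :=
  ∀ s, (∀ a, 0 ≤ π s a) ∧ ∑ a, π s a = 1

/-- A probability distribution on a finite set. -/
def IsDist {S : Type*} [Fintype S] (ρ : S → ℝ) : Prop :=
  (∀ s, 0 ≤ ρ s) ∧ ∑ s, ρ s = 1

/-- The state distribution at time `t` when following policy `π` under kernel `P`
starting from `ρ`. -/
noncomputable def stateDist {S A : Type*} [Fintype S] [Fintype A]
    (P : S → A → S → ℝ) (π : S → A → ℝ) (ρ : S → ℝ) : ℕ → S → ℝ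
  | 0 => ρ
  | (t + 1) => fun s' => ∑ s, ∑ a, stateDist P π ρ t s * π s a * P s a s'

/-- Expected discounted return `J_M(π) = E_π[∑_t γ^t r(s_t, a_t)]`. -/
noncomputable def Jret {S A : Type*} [Fintype S] [Fintype A]
    (P : S → A → S → ℝ) (r : S → A → ℝ) (ρ : S → ℝ) (γ : ℝ) (π : S → A → ℝ) : ℝ :=
  ∑' t : ℕ, γ ^ t * ∑ s, ∑ a, stateDist P π ρ t s * π s a * r s a

/-- Total variation distance between two finite distributions (half the L1 distance). -/
noncomputable def tvFin {S : Type*} [Fintype S] (p q : S → ℝ) : ℝ :=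
  (∑ s, |p s - q s|) / 2

section Aux

variable {S A : Type*} [Fintype S] [Fintype A]

lemma stateDist_isDist (P : S → A → S → ℝ) (hP : IsKernel P)
    (π : S → A → ℝ) (hπ : IsPolicy π) (ρ : S → ℝ) (hρ : IsDist ρ) :
    ∀ t, IsDist (stateDist P π ρ t) := by
  intro t
  induction t with
  | zero => exact hρ
  | succ t ih =>
    constructor
    · intro s'
      refine Finset.sum_nonneg fun s _ => Finset.sum_nonneg fun a _ => ?_
      exact mul_nonneg (mul_nonneg (ih.1 s) ((hπ s).1 a)) ((hP s a).1 s')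
    · show (∑ s', ∑ s, ∑ a, stateDist P π ρ t s * π s a * P s a s') = 1
      have h1 : (∑ s', ∑ s, ∑ a, stateDist P π ρ t s * π s a * P s a s')
          = ∑ s, ∑ a, stateDist P π ρ t s * π s a * ∑ s', P s a s' := by
        rw [Finset.sum_comm]
        refine Finset.sum_congr rfl fun s _ => ?_
        rw [Finset.sum_comm]
        exact Finset.sum_congr rfl fun a _ => by rw [Finset.mul_sum]
      rw [h1]
      have h2 : ∀ s a, (∑ s', P s a s') = (1 : ℝ) := fun s a => (hP s a).2
      simp only [h2, mul_one]
      have h3 : ∀ s, (∑ a, stateDist P π ρ t s * π s a) = stateDist P π ρ t s := by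
        intro s; rw [← Finset.mul_sum, (hπ s).2, mul_one]
      simp only [h3]
      exact ih.2

lemma abs_sum_weight_le (π : S → A → ℝ) (hπ : IsPolicy π)
    (r : S → A → ℝ) (rmax : ℝ) (hr : ∀ s a, |r s a| ≤ rmax)
    (w : S → ℝ) :
    |∑ s, ∑ a, w s * π s a * r s a| ≤ rmax * ∑ s, |w s| := by
  calc |∑ s, ∑ a, w s * π s a * r s a|
      ≤ ∑ s, |∑ a, w s * π s a * r s a| := Finset.abs_sum_le_sum_abs _ _
    _ ≤ ∑ s, ∑ a, |w s * π s a * r s a| :=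
        Finset.sum_le_sum fun s _ => Finset.abs_sum_le_sum_abs _ _
    _ ≤ ∑ s, ∑ a, |w s| * π s a * rmax := by
        refine Finset.sum_le_sum fun s _ => Finset.sum_le_sum fun a _ => ?_
        rw [abs_mul, abs_mul, abs_of_nonneg ((hπ s).1 a)]
        exact mul_le_mul_of_nonneg_left (hr s a)
          (mul_nonneg (abs_nonneg _) ((hπ s).1 a))
    _ = rmax * ∑ s, |w s| := by
        have : ∀ s, (∑ a, |w s| * π s a * rmax) = rmax * |w s| := by
          intro s
          rw [← Finset.sum_mul, ← Finset.mul_sum, (hπ s).2, mul_one, mul_comm]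
        simp only [this, ← Finset.mul_sum]

lemma l1_stateDist_diff_le (P₁ P₂ : S → A → S → ℝ) (hP₁ : IsKernel P₁) (hP₂ : IsKernel P₂)
    (π : S → A → ℝ) (hπ : IsPolicy π) (ρ : S → ℝ) (hρ : IsDist ρ) (ε : ℝ)
    (hε : ∀ s a, (∑ s', |P₁ s a s' - P₂ s a s'|) ≤ 2 * ε) :
    ∀ t, (∑ s, |stateDist P₁ π ρ t s - stateDist P₂ π ρ t s|) ≤ 2 * ε * t := by
  intro t
  induction t with
  | zero => simp [stateDist]
  | succ t ih =>
    set d₁ := stateDist P₁ π ρ t with hd₁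
    set d₂ := stateDist P₂ π ρ t with hd₂
    have hd₂dist : IsDist d₂ := stateDist_isDist P₂ hP₂ π hπ ρ hρ t
    have step : (∑ s', |stateDist P₁ π ρ (t+1) s' - stateDist P₂ π ρ (t+1) s'|)
        ≤ (∑ s, |d₁ s - d₂ s|) + 2 * ε := by
      have expand : ∀ s', stateDist P₁ π ρ (t+1) s' - stateDist P₂ π ρ (t+1) s'
          = ∑ s, ∑ a, ((d₁ s - d₂ s) * π s a * P₁ s a s'
              + d₂ s * π s a * (P₁ s a s' - P₂ s a s')) := by
        intro s'
        show (∑ s, ∑ a, d₁ s * π s a * P₁ s a s')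
            - (∑ s, ∑ a, d₂ s * π s a * P₂ s a s') = _
        rw [← Finset.sum_sub_distrib]
        refine Finset.sum_congr rfl fun s _ => ?_
        rw [← Finset.sum_sub_distrib]
        exact Finset.sum_congr rfl fun a _ => by ring
      calc (∑ s', |stateDist P₁ π ρ (t+1) s' - stateDist P₂ π ρ (t+1) s'|)
          ≤ ∑ s', ∑ s, ∑ a, (|d₁ s - d₂ s| * π s a * P₁ s a s'
              + d₂ s * π s a * |P₁ s a s' - P₂ s a s'|) := by
            refine Finset.sum_le_sum fun s' _ => ?_
            rw [expand s']
            calc |∑ s, ∑ a, ((d₁ s - d₂ s) * π s a * P₁ s a s'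
                  + d₂ s * π s a * (P₁ s a s' - P₂ s a s'))|
                ≤ ∑ s, |∑ a, ((d₁ s - d₂ s) * π s a * P₁ s a s'
                  + d₂ s * π s a * (P₁ s a s' - P₂ s a s'))| :=
                  Finset.abs_sum_le_sum_abs _ _
              _ ≤ ∑ s, ∑ a, |(d₁ s - d₂ s) * π s a * P₁ s a s'
                  + d₂ s * π s a * (P₁ s a s' - P₂ s a s')| :=
                  Finset.sum_le_sum fun s _ => Finset.abs_sum_le_sum_abs _ _
              _ ≤ _ := by
                  refine Finset.sum_le_sum fun s _ => Finset.sum_le_sum fun a _ => ?_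
                  refine (abs_add_le _ _).trans ?_
                  gcongr
                  · rw [abs_mul, abs_mul, abs_of_nonneg ((hπ s).1 a),
                      abs_of_nonneg ((hP₁ s a).1 s')]
                  · rw [abs_mul, abs_mul, abs_of_nonneg (hd₂dist.1 s),
                      abs_of_nonneg ((hπ s).1 a)]
        _ = (∑ s, ∑ a, |d₁ s - d₂ s| * π s a * ∑ s', P₁ s a s')
            + ∑ s, ∑ a, d₂ s * π s a * ∑ s', |P₁ s a s' - P₂ s a s'| := by
            simp only [Finset.sum_add_distrib]
            congr 1
            · rw [Finset.sum_comm]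
              refine Finset.sum_congr rfl fun s _ => ?_
              rw [Finset.sum_comm]
              exact Finset.sum_congr rfl fun a _ => by rw [Finset.mul_sum]
            · rw [Finset.sum_comm]
              refine Finset.sum_congr rfl fun s _ => ?_
              rw [Finset.sum_comm]
              exact Finset.sum_congr rfl fun a _ => by rw [Finset.mul_sum]
        _ ≤ (∑ s, |d₁ s - d₂ s|) + 2 * ε := by
            gcongr
            · have h2 : ∀ s a, (∑ s', P₁ s a s') = (1 : ℝ) := fun s a => (hP₁ s a).2
              simp only [h2, mul_one]
              have h3 : ∀ s, (∑ a, |d₁ s - d₂ s| * π s a) = |d₁ s - d₂ s| := by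
                intro s; rw [← Finset.mul_sum, (hπ s).2, mul_one]
              simp only [h3, le_refl]
            · calc (∑ s, ∑ a, d₂ s * π s a * ∑ s', |P₁ s a s' - P₂ s a s'|)
                  ≤ ∑ s, ∑ a, d₂ s * π s a * (2 * ε) := by
                    refine Finset.sum_le_sum fun s _ => Finset.sum_le_sum fun a _ => ?_
                    exact mul_le_mul_of_nonneg_left (hε s a)
                      (mul_nonneg (hd₂dist.1 s) ((hπ s).1 a))
                _ = 2 * ε := by
                    have h3 : ∀ s, (∑ a, d₂ s * π s a * (2*ε)) = d₂ s * (2*ε) := by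
                      intro s
                      rw [← Finset.sum_mul, ← Finset.mul_sum, (hπ s).2, mul_one]
                    simp only [h3, ← Finset.sum_mul, hd₂dist.2, one_mul]
    calc (∑ s', |stateDist P₁ π ρ (t+1) s' - stateDist P₂ π ρ (t+1) s'|)
        ≤ (∑ s, |d₁ s - d₂ s|) + 2 * ε := step
      _ ≤ 2 * ε * t + 2 * ε := by linarith
      _ = 2 * ε * (t + 1 : ℕ) := by push_cast; ring

lemma jret_summable (P : S → A → S → ℝ) (hP : IsKernel P)
    (r : S → A → ℝ) (rmax : ℝ) (hr : ∀ s a, |r s a| ≤ rmax) (hrmax : 0 ≤ rmax)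
    (ρ : S → ℝ) (hρ : IsDist ρ) (γ : ℝ) (hγ0 : 0 ≤ γ) (hγ1 : γ < 1)
    (π : S → A → ℝ) (hπ : IsPolicy π) :
    Summable (fun t : ℕ => γ ^ t * ∑ s, ∑ a, stateDist P π ρ t s * π s a * r s a) := by
  refine Summable.of_norm_bounded (g := fun t => rmax * γ ^ t)
    ((summable_geometric_of_lt_one hγ0 hγ1).mul_left rmax) fun t => ?_
  have hd := stateDist_isDist P hP π hπ ρ hρ t
  have habs : |∑ s, ∑ a, stateDist P π ρ t s * π s a * r s a|
      ≤ rmax * ∑ s, |stateDist P π ρ t s| := abs_sum_weight_le π hπ r rmax hr _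
  have hsum : (∑ s, |stateDist P π ρ t s|) = 1 := by
    rw [Finset.sum_congr rfl fun s _ => abs_of_nonneg (hd.1 s), hd.2]
  rw [hsum, mul_one] at habs
  rw [Real.norm_eq_abs, abs_mul, abs_pow, abs_of_nonneg hγ0]
  exact le_trans (mul_le_mul_of_nonneg_left habs (by positivity)) (le_of_eq (mul_comm _ _))

lemma sim_lemma (P₁ P₂ : S → A → S → ℝ) (hP₁ : IsKernel P₁) (hP₂ : IsKernel P₂)
    (r : S → A → ℝ) (rmax : ℝ) (hr : ∀ s a, |r s a| ≤ rmax) (hrmax : 0 ≤ rmax)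
    (ρ : S → ℝ) (hρ : IsDist ρ) (γ : ℝ) (hγ0 : 0 ≤ γ) (hγ1 : γ < 1)
    (π : S → A → ℝ) (hπ : IsPolicy π) (ε : ℝ) (hε0 : 0 ≤ ε)
    (hε : ∀ s a, (∑ s', |P₁ s a s' - P₂ s a s'|) ≤ 2 * ε) :
    |Jret P₁ r ρ γ π - Jret P₂ r ρ γ π| ≤ 2 * rmax / (1 - γ) ^ 2 * ε := by
  have h1 := jret_summable P₁ hP₁ r rmax hr hrmax ρ hρ γ hγ0 hγ1 π hπ
  have h2 := jret_summable P₂ hP₂ r rmax hr hrmax ρ hρ γ hγ0 hγ1 π hπ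
  have hγnorm : ‖γ‖ < 1 := by rw [Real.norm_eq_abs, abs_of_nonneg hγ0]; exact hγ1
  have hdiff : Jret P₁ r ρ γ π - Jret P₂ r ρ γ π
      = ∑' t : ℕ, (γ ^ t * (∑ s, ∑ a, stateDist P₁ π ρ t s * π s a * r s a)
          - γ ^ t * (∑ s, ∑ a, stateDist P₂ π ρ t s * π s a * r s a)) := by
    rw [Summable.tsum_sub h1 h2]; rfl
  rw [hdiff]
  have hterm : ∀ t : ℕ,
      ‖γ ^ t * (∑ s, ∑ a, stateDist P₁ π ρ t s * π s a * r s a)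
        - γ ^ t * (∑ s, ∑ a, stateDist P₂ π ρ t s * π s a * r s a)‖
      ≤ 2 * rmax * ε * ((t : ℝ) * γ ^ t) := by
    intro t
    rw [← mul_sub, Real.norm_eq_abs, abs_mul, abs_pow, abs_of_nonneg hγ0]
    have hfd : (∑ s, ∑ a, stateDist P₁ π ρ t s * π s a * r s a)
        - (∑ s, ∑ a, stateDist P₂ π ρ t s * π s a * r s a)
        = ∑ s, ∑ a, (stateDist P₁ π ρ t s - stateDist P₂ π ρ t s) * π s a * r s a := by
      rw [← Finset.sum_sub_distrib]
      refine Finset.sum_congr rfl fun s _ => ?_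
      rw [← Finset.sum_sub_distrib]
      exact Finset.sum_congr rfl fun a _ => by ring
    rw [hfd]
    have habs := abs_sum_weight_le π hπ r rmax hr
      (fun s => stateDist P₁ π ρ t s - stateDist P₂ π ρ t s)
    have hl1 := l1_stateDist_diff_le P₁ P₂ hP₁ hP₂ π hπ ρ hρ ε hε t
    calc γ ^ t * |∑ s, ∑ a, (stateDist P₁ π ρ t s - stateDist P₂ π ρ t s) * π s a * r s a|
        ≤ γ ^ t * (rmax * (2 * ε * t)) := by
          refine mul_le_mul_of_nonneg_left (habs.trans ?_) (by positivity)
          exact mul_le_mul_of_nonneg_left hl1 hrmax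
      _ = 2 * rmax * ε * ((t : ℝ) * γ ^ t) := by ring
  have hgsum : HasSum (fun t : ℕ => 2 * rmax * ε * ((t : ℝ) * γ ^ t))
      (2 * rmax * ε * (γ / (1 - γ) ^ 2)) :=
    (hasSum_coe_mul_geometric_of_norm_lt_one hγnorm).mul_left _
  have := tsum_of_norm_bounded hgsum hterm
  rw [Real.norm_eq_abs] at this
  refine this.trans ?_
  have h1γ : (0:ℝ) < (1 - γ) ^ 2 := by have : (0:ℝ) < 1 - γ := by linarith
                                       positivity
  rw [show 2 * rmax / (1 - γ) ^ 2 * ε = 2 * rmax * ε * (1 / (1 - γ) ^ 2) from by ring]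
  refine mul_le_mul_of_nonneg_left ?_ (by positivity)
  exact (div_le_div_iff_of_pos_right h1γ).mpr (by linarith)

end Aux

/-- Optimal-policy shift bound: for two MDPs differing only in transition kernels `P₁`
and `P₂`, with optimal policies `π₁⋆` and `π₂⋆` respectively, rewards bounded by `rmax`,
and discount `γ ∈ [0,1)`:
`|J_{M₁}(π₁⋆) − J_{M₂}(π₂⋆)| ≤ (2·rmax/(1−γ)²) · sup_{s,a} D_TV(P₁(·|s,a), P₂(·|s,a))`. -/
theorem optimal_return_gap_of_kernel_shift {S A : Type*} [Fintype S] [Fintype A]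
    [Nonempty S] [Nonempty A]
    (P₁ P₂ : S → A → S → ℝ) (hP₁ : IsKernel P₁) (hP₂ : IsKernel P₂)
    (r : S → A → ℝ) (rmax : ℝ) (hr : ∀ s a, |r s a| ≤ rmax)
    (ρ : S → ℝ) (hρ : IsDist ρ) (γ : ℝ) (hγ0 : 0 ≤ γ) (hγ1 : γ < 1)
    (π₁ π₂ : S → A → ℝ) (hπ₁ : IsPolicy π₁) (hπ₂ : IsPolicy π₂)
    (hopt₁ : ∀ π, IsPolicy π → Jret P₁ r ρ γ π ≤ Jret P₁ r ρ γ π₁)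
    (hopt₂ : ∀ π, IsPolicy π → Jret P₂ r ρ γ π ≤ Jret P₂ r ρ γ π₂) :
    |Jret P₁ r ρ γ π₁ - Jret P₂ r ρ γ π₂| ≤
      (2 * rmax / (1 - γ) ^ 2) *
        ⨆ p : S × A, tvFin (P₁ p.1 p.2) (P₂ p.1 p.2) := by
  obtain ⟨s₀⟩ := ‹Nonempty S›
  obtain ⟨a₀⟩ := ‹Nonempty A›
  have hrmax : 0 ≤ rmax := (abs_nonneg _).trans (hr s₀ a₀)
  set ε := ⨆ p : S × A, tvFin (P₁ p.1 p.2) (P₂ p.1 p.2) with hεdef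
  have hbdd : BddAbove (Set.range fun p : S × A => tvFin (P₁ p.1 p.2) (P₂ p.1 p.2)) :=
    Set.Finite.bddAbove (Set.finite_range _)
  have htv_nonneg : ∀ p : S × A, 0 ≤ tvFin (P₁ p.1 p.2) (P₂ p.1 p.2) := by
    intro p
    unfold tvFin
    positivity
  have hε0 : 0 ≤ ε := (htv_nonneg ⟨s₀, a₀⟩).trans (le_ciSup hbdd ⟨s₀, a₀⟩)
  have hε : ∀ s a, (∑ s', |P₁ s a s' - P₂ s a s'|) ≤ 2 * ε := by
    intro s a
    have h : tvFin (P₁ s a) (P₂ s a) ≤ ε := le_ciSup hbdd (⟨s, a⟩ : S × A)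
    unfold tvFin at h
    linarith
  have key : ∀ π, IsPolicy π →
      |Jret P₁ r ρ γ π - Jret P₂ r ρ γ π| ≤ 2 * rmax / (1 - γ) ^ 2 * ε :=
    fun π hπ => sim_lemma P₁ P₂ hP₁ hP₂ r rmax hr hrmax ρ hρ γ hγ0 hγ1 π hπ ε hε0 hε
  rw [abs_sub_le_iff]
  constructor
  · have h21 := hopt₂ π₁ hπ₁
    have hk := (abs_sub_le_iff.1 (key π₁ hπ₁)).1
    linarith
  · have h12 := hopt₁ π₂ hπ₂
    have hk := (abs_sub_le_iff.1 (key π₂ hπ₂)).2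
    linarith
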